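/- Let E ∈ ℝ^{d×d} be a square column-stochastic matrix. Then there exists a natural number n ≥ 1 such that for every pair of probability vectors p, q ∈ Δ^{d-1} there exists a prior γ ∈ Δ^{d-1} with Eⁿγ entrywise positive and with the Bayes map of Eⁿ based on γ sending q to p, if and only if there exists a natural number n ≥ 1 such that every entry of Eⁿ is positive (i.e. E is a primitive matrix). -/

import Mathlib

open Matrix BigOperators

/-- A column-stochastic matrix: nonnegative entries, each column sums to 1. -/
def ColStochastic {d' d : ℕ} (E : Matrix (Fin d') (Fin d) ℝ) : Prop :=
  (∀ y x, 0 ≤ E y x) ∧ ∀ x, ∑ y, E y x = 1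

/-- A probability vector: nonnegative entries summing to 1. -/
def ProbVec {d : ℕ} (p : Fin d → ℝ) : Prop :=
  (∀ x, 0 ≤ p x) ∧ ∑ x, p x = 1

/-- The Bayes map `Ê_γ = D_γ Eᵀ D_{Eγ}⁻¹`, entrywise `(Ê_γ)_{x,y} = E_{y,x} γ_x / (Eγ)_y`. -/
noncomputable def bayesMap {d' d : ℕ} (E : Matrix (Fin d') (Fin d) ℝ) (γ : Fin d → ℝ) :
    Matrix (Fin d) (Fin d') ℝ :=
  Matrix.of fun x y => E y x * γ x / (E *ᵥ γ) y

/-! Necessity: with `p = e_x` and `q = e_y` the Bayes condition reads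
`(Eⁿ)_{yx} γ_x = (Eⁿγ)_y > 0`.

Sufficiency is Sinkhorn scaling of the positive matrix `A = Eⁿ`: with `w = q / Aγ` the condition
says that `D_w A D_γ` has row sums `q` and column sums `p`. Take `γ` maximising
`F γ = ∑ p_x log γ_x - ∑ q_y log (Aγ)_y` over the probability vectors supported on `supp p` and
bounded below by a small `ε` there. Since `F γ ≤ p_x log γ_x - log (min A)`, the maximiser avoids
the faces `γ_x = ε`. As `∑ p = ∑ q`, `F` is scale invariant, so its gradient
`p / γ - (q / Aγ) ᵥ* A` is orthogonal to `γ`; stationarity along `e_x - γ` then gives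
`p_x = γ_x ((q / Aγ) ᵥ* A)_x`, the `x`-th entry of the Bayes map of `A` at `γ` applied to `q`. -/

open Filter Topology Real

namespace ProbVec

variable {d : ℕ} {γ : Fin d → ℝ}

theorem single (x : Fin d) : ProbVec (Pi.single x (1 : ℝ)) :=
  ⟨fun z => by by_cases h : z = x <;> simp [h], by simp⟩

theorem le_one (hγ : ProbVec γ) (x : Fin d) : γ x ≤ 1 :=
  hγ.2 ▸ Finset.single_le_sum (fun z _ => hγ.1 z) (Finset.mem_univ x)

theorem le_mulVec {d' : ℕ} {A : Matrix (Fin d') (Fin d) ℝ} {m : ℝ} (hγ : ProbVec γ)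
    (hA : ∀ y x, m ≤ A y x) (y : Fin d') : m ≤ (A *ᵥ γ) y :=
  calc m = ∑ x, m * γ x := by rw [← Finset.mul_sum, hγ.2, mul_one]
    _ ≤ ∑ x, A y x * γ x :=
      Finset.sum_le_sum fun x _ => mul_le_mul_of_nonneg_right (hA y x) (hγ.1 x)

end ProbVec

theorem exists_pos_forall_le {ι : Type*} [Finite ι] {f : ι → ℝ} (hf : ∀ i, 0 < f i) :
    ∃ m, 0 < m ∧ ∀ i, m ≤ f i :=
  ((eventually_mem_nhdsWithin (s := Set.Ioi 0) (a := 0)).and (eventually_all.2 fun i =>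
    nhdsWithin_le_nhds (eventually_le_nhds (hf i)))).exists

theorem hasDerivAt_log_add_mul {a b : ℝ} (h : a ≠ 0 ∨ b = 0) :
    HasDerivAt (fun t => log (a + t * b)) (b / a) 0 := by
  rcases h with ha | rfl
  · have h := ((hasDerivAt_mul_const (x := (0 : ℝ)) b).const_add a).log
      (by rwa [zero_mul, add_zero])
    rwa [zero_mul, add_zero] at h
  · simpa using hasDerivAt_const (0 : ℝ) (log a)

section Bayes

variable {d' d : ℕ} (A : Matrix (Fin d') (Fin d) ℝ)

theorem bayesMap_mulVec_apply (γ : Fin d → ℝ) (q : Fin d' → ℝ) (x : Fin d) :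
    (bayesMap A γ *ᵥ q) x = γ x * ((q / (A *ᵥ γ)) ᵥ* A) x := by
  simp only [bayesMap, mulVec, vecMul, dotProduct, of_apply, Pi.div_apply, Finset.mul_sum]
  exact Finset.sum_congr rfl fun y _ => by ring

theorem pos_of_bayesMap_mulVec_single {γ : Fin d → ℝ} {x : Fin d} {y : Fin d'}
    (hγ : ∀ z, 0 ≤ γ z) (hAγ : 0 < (A *ᵥ γ) y)
    (h : bayesMap A γ *ᵥ Pi.single y 1 = Pi.single x 1) : 0 < A y x := by
  have hx := congrFun h x
  simp only [mulVec_single_one, col_apply, bayesMap, of_apply, Pi.single_eq_same] at hx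
  rw [div_eq_one_iff_eq hAγ.ne'] at hx
  exact pos_of_mul_pos_left (hx ▸ hAγ) (hγ x)

end Bayes

section Scaling

variable {d' d : ℕ} (A : Matrix (Fin d') (Fin d) ℝ) (p : Fin d → ℝ) (q : Fin d' → ℝ)

noncomputable def scalingPotential (γ : Fin d → ℝ) : ℝ :=
  ∑ x, p x * log (γ x) - ∑ y, q y * log ((A *ᵥ γ) y)

noncomputable def scalingGradient (γ : Fin d → ℝ) : Fin d → ℝ :=
  p / γ - (q / (A *ᵥ γ)) ᵥ* A

variable {A p q}

theorem hasDerivAt_scalingPotential_line {γ v : Fin d → ℝ} (hγv : ∀ x, γ x ≠ 0 ∨ v x = 0)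
    (hAγ : ∀ y, (A *ᵥ γ) y ≠ 0) :
    HasDerivAt (fun t : ℝ => scalingPotential A p q (γ + t • v))
      (scalingGradient A p q γ ⬝ᵥ v) 0 := by
  have hlogγ : HasDerivAt (fun t : ℝ => ∑ x, p x * log (γ x + t * v x))
      (∑ x, p x * (v x / γ x)) 0 :=
    HasDerivAt.fun_sum fun x _ => (hasDerivAt_log_add_mul (hγv x)).const_mul (p x)
  have hlogAγ : HasDerivAt (fun t : ℝ => ∑ y, q y * log ((A *ᵥ γ) y + t * (A *ᵥ v) y))
      (∑ y, q y * ((A *ᵥ v) y / (A *ᵥ γ) y)) 0 :=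
    HasDerivAt.fun_sum fun y _ => (hasDerivAt_log_add_mul (Or.inl (hAγ y))).const_mul (q y)
  refine ((hlogγ.sub hlogAγ).congr_of_eventuallyEq
    (Eventually.of_forall fun t => ?_)).congr_deriv ?_
  · simp [scalingPotential, mulVec_add, mulVec_smul]
  · simp only [scalingGradient, sub_dotProduct, ← dotProduct_mulVec]
    simp only [dotProduct, Pi.div_apply]
    congr 1 <;> exact Finset.sum_congr rfl fun _ _ => by ring

theorem scalingGradient_dotProduct_self {γ : Fin d → ℝ} (hpγ : ∀ x, γ x = 0 → p x = 0)
    (hAγ : ∀ y, (A *ᵥ γ) y ≠ 0) :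
    scalingGradient A p q γ ⬝ᵥ γ = ∑ x, p x - ∑ y, q y := by
  simp only [scalingGradient, sub_dotProduct, ← dotProduct_mulVec]
  simp only [dotProduct, Pi.div_apply]
  congr 1 <;> refine Finset.sum_congr rfl fun z _ => ?_
  · by_cases hz : γ z = 0
    · simp [hz, hpγ z hz]
    · field_simp
  · field_simp [hAγ z]

theorem continuousOn_scalingPotential {s : Set (Fin d → ℝ)}
    (hp : ∀ γ ∈ s, ∀ x, p x ≠ 0 → γ x ≠ 0) (hAs : ∀ γ ∈ s, ∀ y, (A *ᵥ γ) y ≠ 0) :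
    ContinuousOn (scalingPotential A p q) s := by
  refine (continuousOn_finsetSum _ fun x _ => ?_).sub
    (continuousOn_finsetSum _ fun y _ => ?_)
  · by_cases hx : p x = 0
    · simp only [hx, zero_mul]
      exact continuousOn_const
    · exact continuousOn_const.mul ((continuous_apply x).continuousOn.log fun γ hγ => hp γ hγ x hx)
  · exact continuousOn_const.mul
      (((continuous_apply y).comp (continuous_const.matrix_mulVec continuous_id)).continuousOn.log
        fun γ hγ => hAs γ hγ y)

theorem scalingPotential_le (hp : ∀ x, 0 ≤ p x) (hq : ProbVec q) {γ : Fin d → ℝ} (hγ : ProbVec γ)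
    {m : ℝ} (hm : 0 < m) (hAγ : ∀ y, m ≤ (A *ᵥ γ) y) (x : Fin d) :
    scalingPotential A p q γ ≤ p x * log (γ x) - log m := by
  have hlogγ : ∑ z, p z * log (γ z) ≤ p x * log (γ x) := by
    rw [← Finset.add_sum_erase _ _ (Finset.mem_univ x), add_le_iff_nonpos_right]
    exact Finset.sum_nonpos fun z _ =>
      mul_nonpos_of_nonneg_of_nonpos (hp z) (log_nonpos (hγ.1 z) (hγ.le_one z))
  have hlogAγ : log m ≤ ∑ y, q y * log ((A *ᵥ γ) y) :=
    calc log m = ∑ y, q y * log m := by rw [← Finset.sum_mul, hq.2, one_mul]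
      _ ≤ _ := Finset.sum_le_sum fun y _ =>
        mul_le_mul_of_nonneg_left (log_le_log hm (hAγ y)) (hq.1 y)
  rw [scalingPotential]
  linarith

end Scaling

section Domain

variable {d : ℕ} {p : Fin d → ℝ} {ε : ℝ}

def scalingDomain (p : Fin d → ℝ) (ε : ℝ) : Set (Fin d → ℝ) :=
  {γ | (∀ x, p x ≠ 0 → ε ≤ γ x) ∧ (∀ x, p x = 0 → γ x = 0) ∧ ∑ x, γ x = 1}

theorem probVec_of_mem_scalingDomain (hε : 0 ≤ ε) {γ : Fin d → ℝ}
    (hγ : γ ∈ scalingDomain p ε) : ProbVec γ := by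
  refine ⟨fun x => ?_, hγ.2.2⟩
  by_cases hx : p x = 0
  · exact (hγ.2.1 x hx).ge
  · exact hε.trans (hγ.1 x hx)

theorem isCompact_scalingDomain (hε : 0 ≤ ε) : IsCompact (scalingDomain p ε) := by
  refine (isCompact_Icc (a := 0) (b := 1)).of_isClosed_subset ?_ fun γ hγ =>
    ⟨(probVec_of_mem_scalingDomain hε hγ).1, (probVec_of_mem_scalingDomain hε hγ).le_one⟩
  simp only [scalingDomain, Set.ofPred_and, Set.ofPred_forall]
  exact (isClosed_iInter fun x => isClosed_iInter fun _ =>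
      isClosed_le continuous_const (continuous_apply x)).inter
    ((isClosed_iInter fun x => isClosed_iInter fun _ =>
      isClosed_eq (continuous_apply x) continuous_const).inter
    (isClosed_eq (continuous_finsetSum _ fun x _ => continuous_apply x) continuous_const))

theorem eventually_add_smul_mem_scalingDomain {γ v : Fin d → ℝ} (hγ : γ ∈ scalingDomain p ε)
    (hεγ : ∀ x, p x ≠ 0 → ε < γ x) (hv : ∀ x, p x = 0 → v x = 0) (hvsum : ∑ x, v x = 0) :
    ∀ᶠ t in 𝓝 (0 : ℝ), γ + t • v ∈ scalingDomain p ε := by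
  have hlow : ∀ x, ∀ᶠ t in 𝓝 (0 : ℝ), p x ≠ 0 → ε ≤ γ x + t * v x := by
    intro x
    by_cases hx : p x = 0
    · simp [hx]
    · have hline : Tendsto (fun t : ℝ => γ x + t * v x) (𝓝 0) (𝓝 (γ x)) := by
        simpa using (show Continuous fun t : ℝ => γ x + t * v x by fun_prop).tendsto 0
      exact (hline.eventually_const_lt (hεγ x hx)).mono fun t ht _ => ht.le
  filter_upwards [eventually_all.2 hlow] with t ht
  refine ⟨ht, fun x hx => ?_, ?_⟩
  · simp [hγ.2.1 x hx, hv x hx]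
  · simp [Finset.sum_add_distrib, ← Finset.mul_sum, hγ.2.2, hvsum]

theorem exists_pos_forall_le_and_mul_log_lt (hp : ∀ x, 0 ≤ p x) (C : ℝ) :
    ∃ ε, 0 < ε ∧ ∀ x, p x ≠ 0 → ε ≤ p x ∧ p x * log ε < C := by
  refine ((eventually_mem_nhdsWithin (s := Set.Ioi 0) (a := 0)).and
    (eventually_all.2 fun x => ?_)).exists
  by_cases hx : p x = 0
  · simp [hx]
  · have hpx : 0 < p x := (hp x).lt_of_ne' hx
    filter_upwards [nhdsWithin_le_nhds (eventually_le_nhds hpx),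
      (tendsto_log_nhdsGT_zero.const_mul_atBot hpx).eventually_lt_atBot C] with ε h₁ h₂ _
    exact ⟨h₁, h₂⟩

end Domain

section Sinkhorn

variable {d' d : ℕ} {A : Matrix (Fin d') (Fin d) ℝ} {p : Fin d → ℝ} {q : Fin d' → ℝ}

theorem scalingGradient_eq_zero_of_isMaxOn (hpq : ∑ x, p x = ∑ y, q y) {ε : ℝ}
    (hε : 0 ≤ ε) {γ : Fin d → ℝ} (hγ : γ ∈ scalingDomain p ε)
    (hmax : IsMaxOn (scalingPotential A p q) (scalingDomain p ε) γ)
    (hεγ : ∀ x, p x ≠ 0 → ε < γ x) (hAγ : ∀ y, (A *ᵥ γ) y ≠ 0) {x : Fin d} (hx : p x ≠ 0) :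
    scalingGradient A p q γ x = 0 := by
  have hγpos : ∀ z, p z ≠ 0 → γ z ≠ 0 := fun z hz => (hε.trans_lt (hεγ z hz)).ne'
  set v := Pi.single x 1 - γ
  have hv : ∀ z, p z = 0 → v z = 0 := fun z hz => by
    simp [v, hγ.2.1 z hz, show z ≠ x by rintro rfl; exact hx hz]
  have hγv : ∀ z, γ z ≠ 0 ∨ v z = 0 := fun z =>
    (em (p z = 0)).elim (fun hz => .inr (hv z hz)) fun hz => .inl (hγpos z hz)
  have hloc : IsLocalMax (fun t : ℝ => scalingPotential A p q (γ + t • v)) 0 := by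
    filter_upwards [eventually_add_smul_mem_scalingDomain hγ hεγ hv
      (by simp [v, Finset.sum_sub_distrib, hγ.2.2])] with t ht
    simpa using hmax ht
  have h := hloc.hasDerivAt_eq_zero (hasDerivAt_scalingPotential_line hγv hAγ)
  rwa [dotProduct_sub, dotProduct_single, mul_one,
    scalingGradient_dotProduct_self (fun z hz => by_contra fun h => hγpos z h hz) hAγ,
    hpq, sub_self, sub_zero] at h

theorem bayesMap_mulVec_eq_of_scalingGradient_eq_zero {γ : Fin d → ℝ}
    (hγ₀ : ∀ x, p x = 0 → γ x = 0) (hγ : ∀ x, p x ≠ 0 → γ x ≠ 0)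
    (hgrad : ∀ x, p x ≠ 0 → scalingGradient A p q γ x = 0) : bayesMap A γ *ᵥ q = p := by
  funext x
  rw [bayesMap_mulVec_apply]
  by_cases hx : p x = 0
  · rw [hγ₀ x hx, zero_mul, hx]
  · have h := hgrad x hx
    rw [scalingGradient, Pi.sub_apply, Pi.div_apply, sub_eq_zero] at h
    rw [← h]
    field_simp [hγ x hx]

theorem exists_bayesMap_mulVec_eq_of_pos (hA : ∀ y x, 0 < A y x) (hp : ProbVec p)
    (hq : ProbVec q) : ∃ γ, ProbVec γ ∧ (∀ y, 0 < (A *ᵥ γ) y) ∧ bayesMap A γ *ᵥ q = p := by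
  obtain ⟨m, hm, hmA⟩ := exists_pos_forall_le (f := fun i : Fin d' × Fin d => A i.1 i.2)
    fun i => hA i.1 i.2
  have hAγ : ∀ γ, ProbVec γ → ∀ y, m ≤ (A *ᵥ γ) y := fun γ hγ =>
    hγ.le_mulVec fun y x => hmA (y, x)
  obtain ⟨ε, hε, hεp⟩ :=
    exists_pos_forall_le_and_mul_log_lt hp.1 (scalingPotential A p q p + log m)
  have hpK : p ∈ scalingDomain p ε := ⟨fun x hx => (hεp x hx).1, fun _ hx => hx, hp.2⟩
  have hKprob : ∀ γ ∈ scalingDomain p ε, ProbVec γ := fun _ => probVec_of_mem_scalingDomain hε.le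
  obtain ⟨γ, hγK, hmax⟩ := (isCompact_scalingDomain hε.le).exists_isMaxOn ⟨p, hpK⟩
    (continuousOn_scalingPotential (fun γ hγ x hx => (hε.trans_le (hγ.1 x hx)).ne')
      fun γ hγ y => (hm.trans_le (hAγ γ (hKprob γ hγ) y)).ne')
  have hγ := hKprob γ hγK
  have hAγpos : ∀ y, 0 < (A *ᵥ γ) y := fun y => hm.trans_le (hAγ γ hγ y)
  have hεγ : ∀ x, p x ≠ 0 → ε < γ x := fun x hx => (hγK.1 x hx).lt_of_ne fun hεγ => by
    have hle := scalingPotential_le hp.1 hq hγ hm (hAγ γ hγ) x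
    rw [← hεγ] at hle
    linarith [(hεp x hx).2, isMaxOn_iff.1 hmax p hpK]
  exact ⟨γ, hγ, hAγpos, bayesMap_mulVec_eq_of_scalingGradient_eq_zero hγK.2.1
    (fun x hx => (hε.trans (hεγ x hx)).ne') fun x hx =>
      scalingGradient_eq_zero_of_isMaxOn (hp.2.trans hq.2.symm) hε.le hγK hmax hεγ
        (fun y => (hAγpos y).ne') hx⟩

end Sinkhorn

theorem power_prior_hackable_iff_primitive_general {d : ℕ}
    (E : Matrix (Fin d) (Fin d) ℝ) :
    (∃ n : ℕ, 1 ≤ n ∧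
      ∀ (p q : Fin d → ℝ), ProbVec p → ProbVec q →
        ∃ γ : Fin d → ℝ, ProbVec γ ∧ (∀ y, 0 < ((E ^ n) *ᵥ γ) y) ∧
          (bayesMap (E ^ n) γ) *ᵥ q = p) ↔
    (∃ n : ℕ, 1 ≤ n ∧ ∀ y x, 0 < (E ^ n) y x) := by
  constructor
  · rintro ⟨n, hn, h⟩
    refine ⟨n, hn, fun y x => ?_⟩
    obtain ⟨γ, hγ, hpos, hbayes⟩ := h _ _ (ProbVec.single x) (ProbVec.single y)
    exact pos_of_bayesMap_mulVec_single _ hγ.1 (hpos y) hbayes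
  · rintro ⟨n, hn, hpos⟩
    exact ⟨n, hn, fun p q hp hq => exists_bayesMap_mulVec_eq_of_pos hpos hp hq⟩

theorem power_prior_hackable_iff_primitive {d : ℕ}
    (E : Matrix (Fin d) (Fin d) ℝ) (hE : ColStochastic E) :
    (∃ n : ℕ, 1 ≤ n ∧
      ∀ (p q : Fin d → ℝ), ProbVec p → ProbVec q →
        ∃ γ : Fin d → ℝ, ProbVec γ ∧ (∀ y, 0 < ((E ^ n) *ᵥ γ) y) ∧
          (bayesMap (E ^ n) γ) *ᵥ q = p) ↔
    (∃ n : ℕ, 1 ≤ n ∧ ∀ y x, 0 < (E ^ n) y x) :=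
  power_prior_hackable_iff_primitive_general E
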